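/- Let A be a commutative noetherian ring, M a finitely generated A-module, and π: M → M^tl the canonical surjection onto the torsionless quotient. Then I(M) is the preimage of I(M^tl) under the surjective algebra map Sym(π): Sym(M) → Sym(M^tl); consequently the induced map R(π): R(M) → R(M^tl) of Rees algebras is an isomorphism. -/

import Mathlib

open Module LinearMap TensorProduct

/-- The relation on the tensor algebra whose quotient is the symmetric algebra. -/
inductive SymRel (A : Type) [CommRing A] (M : Type) [AddCommGroup M] [Module A M] :
    TensorAlgebra A M → TensorAlgebra A M → Prop
  | mul_comm (x y : M) : SymRel A M (TensorAlgebra.ι A x * TensorAlgebra.ι A y)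
      (TensorAlgebra.ι A y * TensorAlgebra.ι A x)

/-- The symmetric algebra `Sym(M)` of a module `M`. -/
abbrev SymmAlg (A : Type) [CommRing A] (M : Type) [AddCommGroup M] [Module A M] : Type :=
  RingQuot (SymRel A M)

variable {A : Type} [CommRing A] {M N L : Type} [AddCommGroup M] [Module A M]
  [AddCommGroup N] [Module A N] [AddCommGroup L] [Module A L]

private lemma symmAlg_comm_aux (x y : TensorAlgebra A M) :
    RingQuot.mkAlgHom A (SymRel A M) x * RingQuot.mkAlgHom A (SymRel A M) y =
      RingQuot.mkAlgHom A (SymRel A M) y * RingQuot.mkAlgHom A (SymRel A M) x := by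
  induction x using TensorAlgebra.induction with
  | algebraMap r => simp [Algebra.commutes]
  | ι m =>
    induction y using TensorAlgebra.induction with
    | algebraMap r => simp [Algebra.commutes]
    | ι n => simpa [map_mul] using (RingQuot.mkAlgHom_rel A (SymRel.mul_comm m n))
    | mul a b ha hb => rw [map_mul, ← mul_assoc, ha, mul_assoc, hb, ← mul_assoc]
    | add a b ha hb => rw [map_add, mul_add, add_mul, ha, hb]
  | mul a b ha hb => rw [map_mul, mul_assoc, hb, ← mul_assoc, ha, mul_assoc]
  | add a b ha hb => rw [map_add, add_mul, mul_add, ha, hb]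

noncomputable instance (A : Type) [CommRing A] (M : Type) [AddCommGroup M] [Module A M] :
    CommRing (SymmAlg A M) :=
  { (inferInstance : Ring (SymmAlg A M)) with
    mul_comm := fun a b => by
      obtain ⟨x, rfl⟩ := RingQuot.mkAlgHom_surjective A (SymRel A M) a
      obtain ⟨y, rfl⟩ := RingQuot.mkAlgHom_surjective A (SymRel A M) b
      exact symmAlg_comm_aux x y }

/-- The canonical inclusion of `M` into the degree-one part of `Sym(M)`. -/
noncomputable def symι (A : Type) [CommRing A] {M : Type} [AddCommGroup M] [Module A M] :
    M →ₗ[A] SymmAlg A M :=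
  (RingQuot.mkAlgHom A (SymRel A M)).toLinearMap ∘ₗ TensorAlgebra.ι A

/-- Functoriality of the symmetric algebra: `Sym(g) : Sym(M) → Sym(N)`. -/
noncomputable def symMap (A : Type) [CommRing A] {M N : Type} [AddCommGroup M] [Module A M]
    [AddCommGroup N] [Module A N] (g : M →ₗ[A] N) : SymmAlg A M →ₐ[A] SymmAlg A N :=
  RingQuot.liftAlgHom A ⟨TensorAlgebra.lift A ((symι A) ∘ₗ g), by
    intro x y h
    cases h with
    | mul_comm a b => simp [mul_comm]⟩

@[simp] lemma symMap_ι (g : M →ₗ[A] N) (m : M) :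
    symMap A g (symι A m) = symι A (g m) := by
  simp [symMap, symι, RingQuot.liftAlgHom_mkAlgHom_apply]

lemma symmAlg_hom_ext {B : Type} [Semiring B] [Algebra A B] {f g : SymmAlg A M →ₐ[A] B}
    (h : ∀ m : M, f (symι A m) = g (symι A m)) : f = g := by
  have key : f.comp (RingQuot.mkAlgHom A (SymRel A M)) =
      g.comp (RingQuot.mkAlgHom A (SymRel A M)) := by
    apply TensorAlgebra.hom_ext
    apply LinearMap.ext
    intro m
    simpa [symι] using h m
  apply AlgHom.ext
  intro x
  obtain ⟨x, rfl⟩ := RingQuot.mkAlgHom_surjective A (SymRel A M) x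
  exact AlgHom.congr_fun key x

lemma symMap_comp_apply (g : N →ₗ[A] L) (f : M →ₗ[A] N) (x : SymmAlg A M) :
    symMap A (g ∘ₗ f) x = symMap A g (symMap A f x) := by
  have : symMap A (g ∘ₗ f) = (symMap A g).comp (symMap A f) := by
    apply symmAlg_hom_ext
    intro m
    simp
  rw [this]; rfl

/-- The data of a linear map from `M` into a finitely generated free module. -/
structure FreeTarget (A : Type) [CommRing A] (M : Type) [AddCommGroup M] [Module A M] where
  E : Type
  [instAddCommGroup : AddCommGroup E]
  [instModule : Module A E]
  [instFree : Module.Free A E]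
  [instFinite : Module.Finite A E]
  g : M →ₗ[A] E

attribute [instance] FreeTarget.instAddCommGroup FreeTarget.instModule
  FreeTarget.instFree FreeTarget.instFinite

/-- The ideal `I(M) ⊆ Sym(M)`: the intersection over all maps `g : M → E` into finitely
generated free modules of the kernels of `Sym(g)`. -/
noncomputable def reesIdeal (A : Type) [CommRing A] (M : Type) [AddCommGroup M]
    [Module A M] : Ideal (SymmAlg A M) :=
  ⨅ d : FreeTarget A M, RingHom.ker (symMap A d.g)

lemma reesIdeal_le_comap (f : M →ₗ[A] N) :
    reesIdeal A M ≤ Ideal.comap (symMap A f) (reesIdeal A N) := by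
  intro x hx
  simp only [reesIdeal, Ideal.mem_iInf] at hx
  simp only [Ideal.mem_comap, reesIdeal, Ideal.mem_iInf]
  intro d
  have hd := hx ⟨d.E, d.g ∘ₗ f⟩
  rw [RingHom.mem_ker] at hd ⊢
  rw [← symMap_comp_apply]
  exact hd

/-- The Rees algebra `R(M) = Sym(M)/I(M)` of a module `M`. -/
noncomputable abbrev ReesAlg (A : Type) [CommRing A] (M : Type) [AddCommGroup M]
    [Module A M] : Type :=
  SymmAlg A M ⧸ reesIdeal A M

/-- The induced map `R(f) : R(M) → R(N)` of Rees algebras. -/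
noncomputable def reesMap (A : Type) [CommRing A] {M N : Type} [AddCommGroup M]
    [Module A M] [AddCommGroup N] [Module A N] (f : M →ₗ[A] N) :
    ReesAlg A M →ₐ[A] ReesAlg A N :=
  Ideal.quotientMapₐ (reesIdeal A N) (symMap A f) (reesIdeal_le_comap f)

/-!
A finitely generated free module `E` is reflexive, so every `g : M → E` factors through the
torsionless quotient as `M^tl ⊆ M** → E** ≅ E`. Hence every `Sym(g)` factors through `Sym(π)`,
which makes `I(M)` the full preimage of `I(M^tl)`; since `π`, and with it `Sym(π)`, is surjective,
`R(π)` is then bijective.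
-/

noncomputable def torsionlessLift (g : M →ₗ[A] N) [Module.IsReflexive A N] :
    LinearMap.range (Module.Dual.eval A M) →ₗ[A] N :=
  (Module.evalEquiv A N).symm.toLinearMap ∘ₗ g.dualMap.dualMap ∘ₗ
    (LinearMap.range (Module.Dual.eval A M)).subtype

lemma torsionlessLift_comp_rangeRestrict (g : M →ₗ[A] N) [Module.IsReflexive A N] :
    torsionlessLift g ∘ₗ (Module.Dual.eval A M).rangeRestrict = g := by
  ext m
  have hdual : g.dualMap.dualMap (Module.Dual.eval A M m) = Module.Dual.eval A N (g m) := by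
    ext φ; rfl
  simp only [torsionlessLift, LinearMap.comp_apply, Submodule.subtype_apply,
    LinearEquiv.coe_coe, LinearMap.codRestrict_apply]
  rw [hdual, ← Module.evalEquiv_apply, LinearEquiv.symm_apply_apply]

lemma symMap_surjective {f : M →ₗ[A] N} (hf : Function.Surjective f) :
    Function.Surjective (symMap A f) := by
  intro b
  obtain ⟨y, rfl⟩ := RingQuot.mkAlgHom_surjective A (SymRel A N) b
  induction y using TensorAlgebra.induction with
  | algebraMap r => exact ⟨algebraMap A _ r, by simp⟩
  | ι n =>
    obtain ⟨m, rfl⟩ := hf n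
    exact ⟨symι A m, symMap_ι f m⟩
  | mul a b ha hb =>
    obtain ⟨xa, hxa⟩ := ha
    obtain ⟨xb, hxb⟩ := hb
    exact ⟨xa * xb, by rw [map_mul, map_mul, hxa, hxb]⟩
  | add a b ha hb =>
    obtain ⟨xa, hxa⟩ := ha
    obtain ⟨xb, hxb⟩ := hb
    exact ⟨xa + xb, by rw [map_add, map_add, hxa, hxb]⟩

lemma reesIdeal_eq_comap_of_forall_factor (f : M →ₗ[A] N)
    (hfactor : ∀ d : FreeTarget A M, ∃ h : N →ₗ[A] d.E, h ∘ₗ f = d.g) :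
    reesIdeal A M = Ideal.comap (symMap A f) (reesIdeal A N) := by
  refine le_antisymm (reesIdeal_le_comap f) fun x hx => ?_
  simp only [Ideal.mem_comap, reesIdeal, Ideal.mem_iInf, RingHom.mem_ker] at hx ⊢
  intro d
  obtain ⟨h, hcomp⟩ := hfactor d
  rw [← hcomp, symMap_comp_apply]
  exact hx ⟨d.E, h⟩

lemma reesMap_bijective_of_eq_comap {f : M →ₗ[A] N} (hf : Function.Surjective f)
    (hI : reesIdeal A M = Ideal.comap (symMap A f) (reesIdeal A N)) :
    Function.Bijective (reesMap A f) :=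
  ⟨Ideal.quotientMap_injective' (H := reesIdeal_le_comap f) hI.ge,
    Ideal.quotientMap_surjective (H := reesIdeal_le_comap f) (symMap_surjective hf)⟩

lemma reesIdeal_eq_comap_torsionless :
    reesIdeal A M = Ideal.comap (symMap A (Module.Dual.eval A M).rangeRestrict)
      (reesIdeal A (LinearMap.range (Module.Dual.eval A M))) :=
  reesIdeal_eq_comap_of_forall_factor _ fun d =>
    ⟨torsionlessLift d.g, torsionlessLift_comp_rangeRestrict d.g⟩

theorem stmt8 (A : Type) [CommRing A]
    (M : Type) [AddCommGroup M] [Module A M] :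
    reesIdeal A M =
        Ideal.comap (symMap A (Module.Dual.eval A M).rangeRestrict)
          (reesIdeal A (↥(LinearMap.range (Module.Dual.eval A M)))) ∧
      Function.Bijective (reesMap A (M := M) (N := ↥(LinearMap.range (Module.Dual.eval A M))) (Module.Dual.eval A M).rangeRestrict) :=
  ⟨reesIdeal_eq_comap_torsionless, reesMap_bijective_of_eq_comap
    (LinearMap.surjective_rangeRestrict _) reesIdeal_eq_comap_torsionless⟩
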